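/- Suppose G is connected. Let A ⊊ V be a proper subset of the vertices and let i ∈ A. Then the expected number of visits of the Metropolis–Hastings walk RW(G_1) started at i to the vertex i strictly before the first time the walk reaches a vertex outside A satisfies E_i N_i(T_{V∖A}) < 6|A| + 2Δ, where N_i(T_{V∖A}) = #{τ : 0 ≤ τ < T_{V∖A}, X_τ = i}. -/

import Mathlib

open Finset

/-- The Metropolis–Hastings transition matrix on a graph, with unit potential:
`P v u = min (1/deg v) (1/deg u)` for adjacent `u ≠ v`, `0` for non-adjacent `u ≠ v`,
and `P v v = 1 - ∑_{u ∈ Γ(v)} min (1/deg v) (1/deg u)`. -/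
noncomputable def mhMatrix {V : Type*} [Fintype V] [DecidableEq V] (G : SimpleGraph V)
    [DecidableRel G.Adj] : Matrix V V ℝ :=
  Matrix.of fun v u =>
    if u = v then
      1 - ∑ w ∈ G.neighborFinset v, min ((G.degree v : ℝ))⁻¹ ((G.degree w : ℝ))⁻¹
    else if G.Adj v u then min ((G.degree v : ℝ))⁻¹ ((G.degree u : ℝ))⁻¹
    else 0

/-- Probability, for the Markov chain with transition matrix `P` and initial distribution `μ`,
that the trajectory `(X_0, …, X_L)` lies in the event `E`. -/
noncomputable def prTraj {V : Type*} [Fintype V] (P : Matrix V V ℝ) (μ : V → ℝ) (L : ℕ)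
    (E : Set (Fin (L + 1) → V)) : ℝ :=
  ∑ x : Fin (L + 1) → V,
    E.indicator (fun y => μ (y 0) * ∏ τ : Fin L, P (y τ.castSucc) (y τ.succ)) x

/-- Point mass at `i`, as an initial distribution. -/
def dirac {V : Type*} [DecidableEq V] (i : V) : V → ℝ := fun v => if v = i then 1 else 0

/-!
Let `Q` be the Metropolis–Hastings matrix `P` with every transition into or out of `V ∖ A`
deleted (the walk killed on leaving `A`), so that `E_i N_i(T_{V∖A}) = ∑_τ Q^τ(i,i)`.
The truncated Green function `w = ∑_{τ<T} Q^τ(·,i)` satisfies `(1 - Q) w = e_i - Q^T e_i` and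
vanishes off `A`; as `P` is symmetric and stochastic, this gives `𝓔(w) = ⟨w, (1 - P) w⟩ ≤ w(i)`
for the Dirichlet form `𝓔` of `P`. Cauchy–Schwarz along a path `i = p₀, …, p_k ∉ A` with
distinct vertices gives `w(i)² ≤ R 𝓔(w)`, where `R = ∑ⱼ 1/P(pⱼ, pⱼ₊₁)`; hence `w(i) ≤ R`.
On an edge `1/P(u,v) = max(deg u, deg v)`. Along a shortest path to a nearest vertex outside `A`,
every vertex is adjacent to at most three path vertices and all neighbours of `p₀, …, p_{k-2}`
lie in `A`, so `R = ∑ⱼ max(deg pⱼ, deg pⱼ₊₁) < 6|A| + 2Δ`.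
-/

section PathSums

open Matrix

variable {V : Type*} [Fintype V] [DecidableEq V]

theorem sum_ite_last_mul_prod_eq_vecMul_pow {R : Type*} [CommSemiring R] (M : Matrix V V R)
    (μ : V → R) (τ : ℕ) (b : V) :
    ∑ x : Fin (τ + 1) → V, (if x (Fin.last τ) = b then
        μ (x 0) * ∏ s : Fin τ, M (x s.castSucc) (x s.succ) else 0) = (μ ᵥ* M ^ τ) b := by
  induction τ generalizing b with
  | zero =>
    rw [← (Equiv.funUnique (Fin 1) V).symm.sum_comp]
    simp
  | succ τ ih =>
    rw [← (Fin.snocEquiv fun _ => V).sum_comp, Fintype.sum_prod_type, Finset.sum_comm]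
    simp only [Fin.snocEquiv_apply, Fin.snoc_last, Fin.prod_univ_castSucc, Finset.sum_ite_eq',
      Finset.mem_univ, if_true, ← Fin.castSucc_zero, Fin.succ_castSucc, Fin.snoc_castSucc,
      Fin.succ_last]
    rw [pow_succ, ← vecMul_vecMul, vecMul, dotProduct]
    simp only [← ih, Finset.sum_mul, ite_mul, zero_mul]
    rw [Finset.sum_comm]
    simp only [Finset.sum_ite_eq, Finset.mem_univ, if_true, mul_assoc]

end PathSums

section Killed

open Matrix

variable {V : Type*} [DecidableEq V]

def killedMatrix {α : Type*} [Zero α] (P : Matrix V V α) (A : Finset V) : Matrix V V α :=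
  Matrix.of fun v u => if v ∈ A ∧ u ∈ A then P v u else 0

lemma killedMatrix_nonneg {P : Matrix V V ℝ} (hP : ∀ v u, 0 ≤ P v u) (A : Finset V) (v u : V) :
    0 ≤ killedMatrix P A v u := by
  simp only [killedMatrix, of_apply]
  split_ifs
  exacts [hP v u, le_rfl]

lemma prod_killedMatrix_eq_ite {α : Type*} [CommMonoidWithZero α] (P : Matrix V V α)
    (A : Finset V) {τ : ℕ} (x : Fin (τ + 1) → V) (h0 : x 0 ∈ A) :
    ∏ s : Fin τ, killedMatrix P A (x s.castSucc) (x s.succ) =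
      if ∀ s : Fin (τ + 1), 1 ≤ s.val → x s ∈ A then
        ∏ s : Fin τ, P (x s.castSucc) (x s.succ) else 0 := by
  have hstay : (∀ s : Fin τ, x s.castSucc ∈ A ∧ x s.succ ∈ A) ↔
      ∀ s : Fin (τ + 1), 1 ≤ s.val → x s ∈ A := by
    refine ⟨fun h s hs => ?_, fun h s => ⟨?_, h _ s.succ_pos⟩⟩
    · obtain ⟨j, rfl⟩ := Fin.exists_succ_eq.2 (Fin.pos_iff_ne_zero.1 hs)
      exact (h j).2
    · rcases Fin.eq_zero_or_eq_succ s.castSucc with hs | ⟨j, hj⟩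
      · rwa [hs]
      · rw [hj]; exact h _ j.succ_pos
  simp only [killedMatrix, of_apply, Fintype.prod_ite_zero, hstay]

theorem prTraj_stayIn_eq_pow_killedMatrix [Fintype V] (P : Matrix V V ℝ) (A : Finset V) {i : V}
    (hi : i ∈ A) (τ : ℕ) :
    prTraj P (dirac i) τ {x | x (Fin.last τ) = i ∧ ∀ s : Fin (τ + 1), 1 ≤ s.val → x s ∈ A} =
      (killedMatrix P A ^ τ) i i := by
  calc _ = ∑ x : Fin (τ + 1) → V, (if x (Fin.last τ) = i then
        dirac i (x 0) * ∏ s : Fin τ, killedMatrix P A (x s.castSucc) (x s.succ) else 0) := by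
        refine Finset.sum_congr rfl fun x _ => ?_
        by_cases h0 : x 0 = i
        · simp [Set.indicator_apply, prod_killedMatrix_eq_ite P A x (h0 ▸ hi), dirac, h0, ite_and]
        · simp [Set.indicator_apply, dirac, h0]
    _ = (dirac i ᵥ* killedMatrix P A ^ τ) i := sum_ite_last_mul_prod_eq_vecMul_pow ..
    _ = (killedMatrix P A ^ τ) i i := by simp [vecMul, dotProduct, dirac]

end Killed

section Energy

open Matrix

variable {V : Type*} [Fintype V]

noncomputable def dirichletForm (P : Matrix V V ℝ) (w : V → ℝ) : ℝ :=
  (∑ v, ∑ u, P v u * (w v - w u) ^ 2) / 2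

theorem sum_mul_sub_mulVec_eq_dirichletForm {P : Matrix V V ℝ} (hsymm : P.IsSymm)
    (hrow : ∀ v, ∑ u, P v u = 1) (w : V → ℝ) :
    ∑ v, w v * (w v - (P *ᵥ w) v) = dirichletForm P w := by
  have hcol : ∀ u, ∑ v, P v u = 1 := fun u => by simpa only [hsymm.apply] using hrow u
  have hexpand : ∀ v, ∑ u, P v u * (w v - w u) ^ 2 =
      w v ^ 2 * ∑ u, P v u - 2 * (w v * (P *ᵥ w) v) + ∑ u, P v u * w u ^ 2 := by
    intro v
    simp only [mulVec, dotProduct, Finset.mul_sum, ← Finset.sum_sub_distrib,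
      ← Finset.sum_add_distrib]
    exact Finset.sum_congr rfl fun u _ => by ring
  have hswap : ∑ v, ∑ u, P v u * w u ^ 2 = ∑ u, w u ^ 2 := by
    rw [Finset.sum_comm]
    simp only [← Finset.sum_mul, hcol, one_mul]
  simp only [dirichletForm, hexpand, hrow, Finset.sum_add_distrib, Finset.sum_sub_distrib, hswap,
    ← Finset.mul_sum, mul_one]
  simp only [mul_sub, Finset.sum_sub_distrib, ← sq]
  ring

theorem two_mul_sum_range_le_sum_sum {F : V → V → ℝ} (hF : ∀ v u, 0 ≤ F v u)
    (hsymm : ∀ v u, F v u = F u v) {p : ℕ → V} {k : ℕ} (hp : Set.InjOn p (Set.Iic k)) :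
    2 * ∑ j ∈ range k, F (p j) (p (j + 1)) ≤ ∑ v, ∑ u, F v u := by
  classical
  have hmem : ∀ j ∈ range k, j ∈ Set.Iic k ∧ j + 1 ∈ Set.Iic k := fun j hj =>
    ⟨Set.mem_Iic.2 (Finset.mem_range.1 hj).le, Set.mem_Iic.2 (Finset.mem_range.1 hj)⟩
  set fwd := (range k).image fun j => (p j, p (j + 1))
  set bwd := (range k).image fun j => (p (j + 1), p j)
  have hfwd : ∑ q ∈ fwd, F q.1 q.2 = ∑ j ∈ range k, F (p j) (p (j + 1)) :=
    Finset.sum_image fun a ha b hb h => hp (hmem a ha).1 (hmem b hb).1 (Prod.ext_iff.1 h).1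
  have hbwd : ∑ q ∈ bwd, F q.1 q.2 = ∑ j ∈ range k, F (p j) (p (j + 1)) := by
    rw [Finset.sum_image fun a ha b hb h => hp (hmem a ha).1 (hmem b hb).1 (Prod.ext_iff.1 h).2]
    exact Finset.sum_congr rfl fun j _ => hsymm _ _
  have hdisj : Disjoint fwd bwd := by
    simp only [fwd, bwd, Finset.disjoint_left, Finset.mem_image]
    rintro _ ⟨a, ha, rfl⟩ ⟨b, hb, h⟩
    have h1 := hp (hmem b hb).2 (hmem a ha).1 (Prod.ext_iff.1 h).1
    have h2 := hp (hmem b hb).1 (hmem a ha).2 (Prod.ext_iff.1 h).2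
    omega
  calc 2 * ∑ j ∈ range k, F (p j) (p (j + 1)) = ∑ q ∈ fwd ∪ bwd, F q.1 q.2 := by
        rw [Finset.sum_union hdisj, hfwd, hbwd, two_mul]
    _ ≤ ∑ q : V × V, F q.1 q.2 := Finset.sum_le_univ_sum_of_nonneg fun q => hF q.1 q.2
    _ = ∑ v, ∑ u, F v u := Fintype.sum_prod_type _

theorem sq_sub_le_sum_inv_mul_dirichletForm {P : Matrix V V ℝ} (hsymm : P.IsSymm)
    (hnonneg : ∀ v u, 0 ≤ P v u) {p : ℕ → V} {k : ℕ} (hp : Set.InjOn p (Set.Iic k))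
    (hpos : ∀ j < k, 0 < P (p j) (p (j + 1))) (w : V → ℝ) :
    (w (p 0) - w (p k)) ^ 2 ≤
      (∑ j ∈ range k, (P (p j) (p (j + 1)))⁻¹) * dirichletForm P w := by
  have hpos' : ∀ j ∈ range k, 0 < P (p j) (p (j + 1)) := fun j hj =>
    hpos j (Finset.mem_range.1 hj)
  have hpath : ∑ j ∈ range k, P (p j) (p (j + 1)) * (w (p j) - w (p (j + 1))) ^ 2 ≤
      dirichletForm P w := by
    have := two_mul_sum_range_le_sum_sum (F := fun v u => P v u * (w v - w u) ^ 2)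
      (fun v u => mul_nonneg (hnonneg v u) (sq_nonneg _))
      (fun v u => by rw [hsymm.apply, ← neg_sub, neg_sq]) hp
    rw [dirichletForm]
    linarith
  rw [← Finset.sum_range_sub' (fun j => w (p j))]
  refine (Finset.sum_sq_le_sum_mul_sum_of_sq_le_mul _ (fun j hj => (inv_pos.2 (hpos' j hj)).le)
    (fun j hj => mul_nonneg (hpos' j hj).le (sq_nonneg _)) fun j hj => ?_).trans
    (by gcongr; exact Finset.sum_nonneg fun j hj => (inv_pos.2 (hpos' j hj)).le)
  rw [← mul_assoc, inv_mul_cancel₀ (hpos' j hj).ne', one_mul]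

end Energy

section Green

open Matrix

variable {V : Type*} [Fintype V] [DecidableEq V]

lemma pow_killedMatrix_apply_eq_zero {P : Matrix V V ℝ} {A : Finset V} {v i : V} (hv : v ∉ A)
    (hi : i ∈ A) (τ : ℕ) : (killedMatrix P A ^ τ) v i = 0 := by
  cases τ with
  | zero => exact one_apply_ne fun h => hv (h ▸ hi)
  | succ τ =>
    rw [pow_succ', mul_apply]
    exact Finset.sum_eq_zero fun u _ => by simp [killedMatrix, hv]

theorem dirichletForm_green_le {P : Matrix V V ℝ} (hsymm : P.IsSymm) (hnonneg : ∀ v u, 0 ≤ P v u)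
    (hrow : ∀ v, ∑ u, P v u = 1) {A : Finset V} {i : V} (hi : i ∈ A) (T : ℕ) :
    dirichletForm P (fun v => (∑ τ ∈ range T, killedMatrix P A ^ τ) v i) ≤
      (∑ τ ∈ range T, killedMatrix P A ^ τ) i i := by
  set Q := killedMatrix P A
  set w : V → ℝ := fun v => (∑ τ ∈ range T, Q ^ τ) v i
  have hQ := killedMatrix_nonneg hnonneg A
  have hw_nonneg : ∀ v, 0 ≤ w v := fun v => by
    simp only [w, Matrix.sum_apply]; exact Finset.sum_nonneg fun τ _ => pow_apply_nonneg hQ τ v i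
  have hw_out : ∀ v ∉ A, w v = 0 := fun v hv => by
    simp only [w, Matrix.sum_apply]
    exact Finset.sum_eq_zero fun τ _ => pow_killedMatrix_apply_eq_zero hv hi τ
  have hQw : ∀ v, w v * (Q *ᵥ w) v = w v * (P *ᵥ w) v := by
    intro v
    by_cases hv : v ∈ A
    · congr 1
      refine Finset.sum_congr rfl fun u _ => ?_
      by_cases hu : u ∈ A
      · simp [Q, killedMatrix, hv, hu]
      · simp [hw_out u hu]
    · simp [hw_out v hv]
  have hgeom : ∀ v, w v - (Q *ᵥ w) v = (1 : Matrix V V ℝ) v i - (Q ^ T) v i := by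
    intro v
    have := congrFun (congrFun (mul_neg_geom_sum Q T) v) i
    rwa [sub_mul, one_mul, Matrix.sub_apply, Matrix.sub_apply] at this
  rw [← sum_mul_sub_mulVec_eq_dirichletForm hsymm hrow]
  calc ∑ v, w v * (w v - (P *ᵥ w) v) = ∑ v, w v * ((1 : Matrix V V ℝ) v i - (Q ^ T) v i) := by
        simp only [mul_sub, ← hQw, ← hgeom]
    _ = w i - ∑ v, w v * (Q ^ T) v i := by simp [mul_sub, one_apply]
    _ ≤ w i := sub_le_self _ <| Finset.sum_nonneg fun v _ =>
        mul_nonneg (hw_nonneg v) (pow_apply_nonneg hQ T v i)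

theorem sum_range_pow_killedMatrix_apply_le {P : Matrix V V ℝ} (hsymm : P.IsSymm)
    (hnonneg : ∀ v u, 0 ≤ P v u) (hrow : ∀ v, ∑ u, P v u = 1) {A : Finset V} {p : ℕ → V} {k : ℕ}
    (hp0 : p 0 ∈ A) (hpk : p k ∉ A) (hp : Set.InjOn p (Set.Iic k))
    (hpos : ∀ j < k, 0 < P (p j) (p (j + 1))) (T : ℕ) :
    ∑ τ ∈ range T, (killedMatrix P A ^ τ) (p 0) (p 0) ≤
      ∑ j ∈ range k, (P (p j) (p (j + 1)))⁻¹ := by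
  set w : V → ℝ := fun v => (∑ τ ∈ range T, killedMatrix P A ^ τ) v (p 0)
  have hw : w (p k) = 0 := by
    simp only [w, Matrix.sum_apply]
    exact Finset.sum_eq_zero fun τ _ => pow_killedMatrix_apply_eq_zero hpk hp0 τ
  have hk : 0 < k := Nat.pos_of_ne_zero fun h => hpk (h ▸ hp0)
  have hR : 0 < ∑ j ∈ range k, (P (p j) (p (j + 1)))⁻¹ :=
    Finset.sum_pos (fun j hj => inv_pos.2 (hpos j (Finset.mem_range.1 hj)))
      (Finset.nonempty_range_iff.2 hk.ne')
  have hsq := sq_sub_le_sum_inv_mul_dirichletForm hsymm hnonneg hp hpos w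
  have henergy := dirichletForm_green_le hsymm hnonneg hrow hp0 T
  rw [hw, sub_zero] at hsq
  have hquad := hsq.trans (mul_le_mul_of_nonneg_left henergy hR.le)
  rw [← Matrix.sum_apply]
  nlinarith

end Green

section MetropolisHastings

variable {V : Type*} [Fintype V] [DecidableEq V] (G : SimpleGraph V) [DecidableRel G.Adj]

lemma mhMatrix_apply_of_adj {v u : V} (h : G.Adj v u) :
    mhMatrix G v u = min ((G.degree v : ℝ))⁻¹ ((G.degree u : ℝ))⁻¹ := by
  simp [mhMatrix, h.ne', h]

lemma mhMatrix_isSymm : (mhMatrix G).IsSymm := by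
  refine Matrix.IsSymm.ext fun v u => ?_
  by_cases h : G.Adj v u
  · rw [mhMatrix_apply_of_adj G h, mhMatrix_apply_of_adj G h.symm, min_comm]
  · by_cases huv : u = v
    · rw [huv]
    · simp [mhMatrix, huv, Ne.symm huv, h, G.adj_comm u v]

lemma mhMatrix_nonneg (v u : V) : 0 ≤ mhMatrix G v u := by
  by_cases huv : u = v
  · subst huv
    have hsum : ∑ w ∈ G.neighborFinset u, min ((G.degree u : ℝ))⁻¹ ((G.degree w : ℝ))⁻¹ ≤ 1 :=
      calc _ ≤ ∑ _w ∈ G.neighborFinset u, ((G.degree u : ℝ))⁻¹ :=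
            Finset.sum_le_sum fun _ _ => min_le_left _ _
        _ = (G.degree u : ℝ) * ((G.degree u : ℝ))⁻¹ := by simp
        _ ≤ 1 := mul_inv_le_one
    simpa [mhMatrix] using hsum
  · by_cases h : G.Adj v u
    · rw [mhMatrix_apply_of_adj G h]; positivity
    · simp [mhMatrix, huv, h]

lemma sum_mhMatrix_row (v : V) : ∑ u, mhMatrix G v u = 1 := by
  set S := ∑ w ∈ G.neighborFinset v, min ((G.degree v : ℝ))⁻¹ ((G.degree w : ℝ))⁻¹
  have hsplit : ∀ u, mhMatrix G v u = (if u = v then 1 - S else 0) +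
      if G.Adj v u then min ((G.degree v : ℝ))⁻¹ ((G.degree u : ℝ))⁻¹ else 0 := by
    intro u
    by_cases huv : u = v
    · simp [mhMatrix, huv, S]
    · simp [mhMatrix, huv]
  simp only [hsplit, Finset.sum_add_distrib, Finset.sum_ite_eq', Finset.mem_univ, if_true,
    ← Finset.sum_filter, ← G.neighborFinset_eq_filter, S, sub_add_cancel]

lemma inv_mhMatrix_apply_of_adj {v u : V} (h : G.Adj v u) :
    (mhMatrix G v u)⁻¹ = ((max (G.degree v) (G.degree u) : ℕ) : ℝ) := by
  have hv : (0 : ℝ) < G.degree v := by exact_mod_cast h.degree_pos_left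
  have hu : (0 : ℝ) < G.degree u := by exact_mod_cast h.degree_pos_right
  rw [mhMatrix_apply_of_adj G h, Nat.cast_max]
  rcases le_total (G.degree v : ℝ) (G.degree u) with hle | hle
  · rw [max_eq_right hle, min_eq_right (inv_anti₀ hv hle), inv_inv]
  · rw [max_eq_left hle, min_eq_left (inv_anti₀ hu hle), inv_inv]

lemma mhMatrix_pos_of_adj {v u : V} (h : G.Adj v u) : 0 < mhMatrix G v u :=
  inv_pos.1 <| by
    rw [inv_mhMatrix_apply_of_adj G h]
    exact_mod_cast h.degree_pos_left.trans_le (le_max_left _ _)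

end MetropolisHastings

lemma Nat.sum_range_max_add_le (d : ℕ → ℕ) (n : ℕ) :
    ∑ j ∈ range n, max (d j) (d (j + 1)) + d 0 ≤ 2 * ∑ j ∈ range n, d j + d n := by
  induction n with
  | zero => simp
  | succ n ih =>
    simp only [Finset.sum_range_succ]
    have := max_le (Nat.le_add_right (d n) (d (n + 1))) (Nat.le_add_left (d (n + 1)) (d n))
    omega

namespace SimpleGraph

variable {V : Type*} {G : SimpleGraph V} {u v : V} {W : G.Walk u v}

lemma Walk.dist_getVert_of_length_eq_dist (hW : W.length = G.dist u v) {j : ℕ}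
    (hj : j ≤ W.length) : G.dist u (W.getVert j) = j := by
  rw [← length_eq_dist_of_subwalk hW (W.isSubwalk_take j), Walk.take_length, min_eq_left hj]

lemma Walk.injOn_getVert_of_length_eq_dist (hW : W.length = G.dist u v) :
    Set.InjOn W.getVert (Set.Iic W.length) := fun j hj j' hj' h => by
  rw [← W.dist_getVert_of_length_eq_dist hW hj, ← W.dist_getVert_of_length_eq_dist hW hj', h]

lemma Walk.card_filter_adj_getVert_le_three [DecidableRel G.Adj] (hW : W.length = G.dist u v)
    (x : V) {m : ℕ} (hm : m ≤ W.length + 1) :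
    #{j ∈ range m | G.Adj (W.getVert j) x} ≤ 3 := by
  calc #{j ∈ range m | G.Adj (W.getVert j) x}
      ≤ #(Finset.Icc (G.dist u x - 1) (G.dist u x + 1)) := by
        refine Finset.card_le_card fun j hj => ?_
        obtain ⟨hjm, hadj⟩ := Finset.mem_filter.1 hj
        have hdist := W.dist_getVert_of_length_eq_dist hW (j := j) (by simp at hjm; omega)
        rw [Finset.mem_Icc]
        rcases hadj.diff_dist_adj (u := u) with h | h | h <;> omega
    _ ≤ 3 := by simp only [Nat.card_Icc]; omega

lemma Walk.sum_degree_getVert_le [Fintype V] [DecidableRel G.Adj] (hW : W.length = G.dist u v)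
    {m : ℕ} (hm : m ≤ W.length + 1) {A : Finset V}
    (hA : ∀ j < m, G.neighborFinset (W.getVert j) ⊆ A) :
    ∑ j ∈ range m, G.degree (W.getVert j) ≤ 3 * #A := by
  calc ∑ j ∈ range m, G.degree (W.getVert j)
      = ∑ j ∈ range m, #{x ∈ A | G.Adj (W.getVert j) x} := by
        refine Finset.sum_congr rfl fun j hj => ?_
        rw [← card_neighborFinset_eq_degree]
        congr 1
        ext x
        simp only [Finset.mem_filter, mem_neighborFinset]
        exact ⟨fun h => ⟨hA j (Finset.mem_range.1 hj) ((mem_neighborFinset ..).2 h), h⟩, And.right⟩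
    _ = ∑ x ∈ A, #{j ∈ range m | G.Adj (W.getVert j) x} :=
        Finset.sum_card_bipartiteAbove_eq_sum_card_bipartiteBelow _
    _ ≤ ∑ _x ∈ A, 3 := Finset.sum_le_sum fun x _ => W.card_filter_adj_getVert_le_three hW x hm
    _ = 3 * #A := by rw [Finset.sum_const, smul_eq_mul, mul_comm]

lemma Walk.sum_max_degree_getVert_lt [Fintype V] [DecidableRel G.Adj] {A : Finset V}
    (hW : W.length = G.dist u v) (hu : u ∈ A) (hv : v ∉ A)
    (hnearest : ∀ x ∉ A, G.dist u v ≤ G.dist u x) :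
    ∑ j ∈ range W.length, max (G.degree (W.getVert j)) (G.degree (W.getVert (j + 1))) <
      6 * #A + 2 * G.maxDegree := by
  set k := W.length
  have hk : 0 < k := Nat.pos_of_ne_zero fun h => hv (W.eq_of_length_eq_zero h ▸ hu)
  have hnbr : ∀ j < k - 1, G.neighborFinset (W.getVert j) ⊆ A := by
    intro j hj x hx
    by_contra hxA
    have hdist := W.dist_getVert_of_length_eq_dist hW (j := j) (by omega)
    have := hnearest x hxA
    rcases ((G.mem_neighborFinset _ _).1 hx).diff_dist_adj (u := u) with h | h | h <;> omega
  have hsum := W.sum_degree_getVert_le hW (m := k - 1) (by omega) hnbr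
  have hmax := Nat.sum_range_max_add_le (fun j => G.degree (W.getVert j)) (k - 1)
  have hfirst : 0 < G.degree (W.getVert 0) := (W.adj_getVert_succ hk).degree_pos_left
  have hpenultimate := G.degree_le_maxDegree (W.getVert (k - 1))
  have hlast := G.degree_le_maxDegree (W.getVert k)
  have hsplit := Finset.sum_range_succ
    (fun j => max (G.degree (W.getVert j)) (G.degree (W.getVert (j + 1)))) (k - 1)
  rw [Nat.sub_add_cancel hk] at hsplit
  omega

end SimpleGraph

/-- `E_i N_i(T_{V∖A}) = ∑_τ Pr_i[X_τ = i, τ < T_{V∖A}]`, and `τ < T_{V∖A}` means that the walk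
is in `A` at the times `1, …, τ`. -/
theorem mh_returns_before_escape {V : Type*} [Fintype V] [DecidableEq V] (G : SimpleGraph V)
    [DecidableRel G.Adj] (hG : G.Connected)
    (A : Finset V) (hA : A ⊂ Finset.univ) (i : V) (hi : i ∈ A) :
    (∑' τ : ℕ, ENNReal.ofReal (prTraj (mhMatrix G) (dirac i) τ
        {x | x (Fin.last τ) = i ∧ ∀ s : Fin (τ + 1), 1 ≤ s.val → x s ∈ A})) <
      ENNReal.ofReal (6 * (A.card : ℝ) + 2 * (G.maxDegree : ℝ)) := by
  obtain ⟨b, hbA, hnearest⟩ : ∃ b ∉ A, ∀ x ∉ A, G.dist i b ≤ G.dist i x := by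
    obtain ⟨b₀, -, hb₀⟩ := Finset.exists_of_ssubset hA
    obtain ⟨b, hb, hmin⟩ := Aᶜ.exists_min_image (G.dist i) ⟨b₀, Finset.mem_compl.2 hb₀⟩
    exact ⟨b, Finset.mem_compl.1 hb, fun x hx => hmin x (Finset.mem_compl.2 hx)⟩
  obtain ⟨W, hW⟩ := hG.exists_walk_length_eq_dist i b
  set R := ∑ j ∈ range W.length,
    max (G.degree (W.getVert j)) (G.degree (W.getVert (j + 1))) with hR
  have hgreen (T : ℕ) :
      ∑ τ ∈ range T, (killedMatrix (mhMatrix G) A ^ τ) i i ≤ R := by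
    have := sum_range_pow_killedMatrix_apply_le (mhMatrix_isSymm G) (mhMatrix_nonneg G)
      (sum_mhMatrix_row G) (by simpa using hi) (by simpa using hbA)
      (W.injOn_getVert_of_length_eq_dist hW)
      (fun j hj => mhMatrix_pos_of_adj G (W.adj_getVert_succ hj)) T
    rw [SimpleGraph.Walk.getVert_zero] at this
    rw [hR, Nat.cast_sum]
    exact this.trans_eq <| Finset.sum_congr rfl fun j hj =>
      inv_mhMatrix_apply_of_adj G (W.adj_getVert_succ (Finset.mem_range.1 hj))
  have hpow_nonneg := Matrix.pow_apply_nonneg (killedMatrix_nonneg (mhMatrix_nonneg G) A)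
  calc _ = ∑' τ : ℕ, ENNReal.ofReal ((killedMatrix (mhMatrix G) A ^ τ) i i) := by
        simp only [prTraj_stayIn_eq_pow_killedMatrix _ A hi]
    _ ≤ ENNReal.ofReal R := ENNReal.tsum_le_of_sum_range_le fun T => by
        rw [← ENNReal.ofReal_sum_of_nonneg fun τ _ => hpow_nonneg τ i i]
        exact ENNReal.ofReal_le_ofReal (hgreen T)
    _ < _ := (ENNReal.ofReal_lt_ofReal_iff_of_nonneg (Nat.cast_nonneg _)).2 <| by
        exact_mod_cast W.sum_max_degree_getVert_lt hW hi hbA hnearest
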